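/- arXiv:2508.17159 — 2 statements merged into one kernel-verified Lean document; each statement's English description precedes it below -/
import Mathlib

section
/- Let 0 < δ < 1/4 and let (x_n)_{n∈ℕ} be a δ-pseudo orbit of T. For each n ∈ ℕ let j_n be the smallest positive integer with T(x_n) ∈ [j_n − 1, j_n]. Then j_{n+1} ≤ 4^{ℓ(j_n)} + 1 for all n ∈ ℕ; equivalently, [j_{n+1} − 1, j_{n+1}] ⊆ T([j_n − 1, j_n]) for all n. -/
/-!
Since `T (x n) ≤ j n` and the orbit error is below `1/4`, the next point satisfies
`x (n+1) < j n + 1/4`. On `[0, j n]` the map `T` only interpolates values `Tval m` with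
`m ≤ j n`, all bounded by `4 ^ ℓ(j n) + 1`; on the short piece `[j n, j n + 1/4)` it either
decreases from `Tval (j n)` (if `j n` is odd) or rises from `0` to at most a quarter of
`Tval (j n + 1) ≤ 4 ^ (ℓ(j n) + 1) + 1`. Hence `T (x (n+1)) ≤ 4 ^ ℓ(j n) + 1`, and the first
unit interval containing it has index at most `4 ^ ℓ(j n) + 1`.
-/

open Set Filter

noncomputable section

/-- `ell n = min {k ∈ ℤ⁺ : n ≤ 4^k}`. -/
def ell (n : ℕ) : ℕ := sInf {k : ℕ | 1 ≤ k ∧ n ≤ 4 ^ k}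

/-- The value of the map `T` at the nonnegative integer `n`:
`0` if `n` is even and `4 ^ ℓ(n) + 1` if `n` is odd. -/
def Tval (n : ℕ) : ℝ := if Even n then 0 else 4 ^ ell n + 1

/-- `T : [0,∞) → [0,∞)` is the unique continuous map which is affine on each
integer interval `[n-1, n]` and takes the value `Tval n` at every nonnegative
integer `n`.  This is expressed by linear interpolation on each `[n, n+1]`. -/
def IsT (T : ℝ → ℝ) : Prop :=
  ∀ n : ℕ, ∀ x ∈ Set.Icc (n : ℝ) (n + 1),
    T x = ((n : ℝ) + 1 - x) * Tval n + (x - (n : ℝ)) * Tval (n + 1)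

/-- `(x_k)` is a `δ`-pseudo orbit of `T` in `[0,∞)`. -/
def IsPseudoOrbit (T : ℝ → ℝ) (δ : ℝ) (x : ℕ → ℝ) : Prop :=
  (∀ k, 0 ≤ x k) ∧ ∀ k, |x (k + 1) - T (x k)| < δ

lemma ell_spec (n : ℕ) : 1 ≤ ell n ∧ n ≤ 4 ^ ell n := by
  refine Nat.sInf_mem (⟨max 1 n, le_max_left _ _, ?_⟩ : {k : ℕ | 1 ≤ k ∧ n ≤ 4 ^ k}.Nonempty)
  calc n ≤ 4 ^ n := (Nat.lt_pow_self (by norm_num)).le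
    _ ≤ 4 ^ max 1 n := Nat.pow_le_pow_right (by norm_num) (le_max_right _ _)

lemma ell_mono : Monotone ell := fun _ n h =>
  Nat.sInf_le ⟨(ell_spec n).1, h.trans (ell_spec n).2⟩

lemma ell_succ_le (n : ℕ) : ell (n + 1) ≤ ell n + 1 := by
  have hpos : 1 ≤ 4 ^ ell n := Nat.one_le_pow _ _ (by norm_num)
  refine Nat.sInf_le ⟨by omega, ?_⟩
  rw [pow_succ]
  linarith [(ell_spec n).2]

lemma Tval_nonneg (n : ℕ) : 0 ≤ Tval n := by
  unfold Tval
  split <;> positivity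

lemma Tval_le_of_le {m n : ℕ} (h : m ≤ n) : Tval m ≤ 4 ^ ell n + 1 := by
  unfold Tval
  split
  · positivity
  · gcongr
    · norm_num
    · exact ell_mono h

lemma Tval_succ_le (n : ℕ) : Tval (n + 1) ≤ 4 * 4 ^ ell n + 1 :=
  calc Tval (n + 1) ≤ 4 ^ ell (n + 1) + 1 := Tval_le_of_le le_rfl
    _ ≤ 4 ^ (ell n + 1) + 1 := by gcongr <;> [norm_num; exact ell_succ_le n]
    _ = 4 * 4 ^ ell n + 1 := by ring

lemma Tval_of_even {n : ℕ} (h : Even n) : Tval n = 0 := if_pos h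

lemma Tval_of_odd {n : ℕ} (h : Odd n) : Tval n = 4 ^ ell n + 1 :=
  if_neg (Nat.not_even_iff_odd.mpr h)

lemma le_of_minimal_unit_interval {t : ℝ} (ht : 0 ≤ t) {j B : ℕ} (hB : 1 ≤ B) (htB : t ≤ B)
    (hj : ∀ m : ℕ, 1 ≤ m → t ∈ Icc ((m : ℝ) - 1) m → j ≤ m) : j ≤ B := by
  set m := max 1 ⌈t⌉₊
  have hmem : t ∈ Icc ((m : ℝ) - 1) m := by
    rcases le_total ⌈t⌉₊ 1 with h | h
    · have hceil : t ≤ 1 := by exact_mod_cast Nat.ceil_le.mp h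
      rw [show m = 1 from max_eq_left h]
      constructor <;> push_cast <;> linarith
    · rw [show m = ⌈t⌉₊ from max_eq_right h]
      exact ⟨by linarith [Nat.ceil_lt_add_one ht], Nat.le_ceil t⟩
  exact (hj m (le_max_left _ _) hmem).trans (max_le hB (Nat.ceil_le.mpr htB))

namespace IsT

variable {T : ℝ → ℝ}

lemma apply_of_nonneg (hT : IsT T) {y : ℝ} (hy : 0 ≤ y) :
    T y = (⌊y⌋₊ + 1 - y) * Tval ⌊y⌋₊ + (y - ⌊y⌋₊) * Tval (⌊y⌋₊ + 1) :=
  hT _ y ⟨Nat.floor_le hy, (Nat.lt_floor_add_one y).le⟩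

lemma nonneg (hT : IsT T) {y : ℝ} (hy : 0 ≤ y) : 0 ≤ T y := by
  rw [hT.apply_of_nonneg hy]
  have := Nat.floor_le hy
  have := Nat.lt_floor_add_one y
  have := Tval_nonneg ⌊y⌋₊
  have := Tval_nonneg (⌊y⌋₊ + 1)
  nlinarith

lemma le_of_lt_add_quarter (hT : IsT T) {J : ℕ} {y : ℝ} (hy : 0 ≤ y) (hyJ : y < J + 1 / 4) :
    T y ≤ 4 ^ ell J + 1 := by
  set N := ⌊y⌋₊
  have hNy : (N : ℝ) ≤ y := Nat.floor_le hy
  have hyN : y < N + 1 := Nat.lt_floor_add_one y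
  rw [hT.apply_of_nonneg hy]
  rcases lt_or_ge N J with hNJ | hJN
  · have hN := Tval_le_of_le hNJ.le
    have hN1 := Tval_le_of_le (Nat.succ_le_of_lt hNJ)
    nlinarith
  obtain rfl : N = J := by
    have : N < J + 1 := by exact_mod_cast (show (N : ℝ) < J + 1 by linarith)
    omega
  rcases Nat.even_or_odd N with hN | hN
  · rw [Tval_of_even hN]
    have := Tval_succ_le N
    have := Tval_nonneg (N + 1)
    nlinarith
  · rw [Tval_of_odd hN, Tval_of_even hN.add_one]
    have : (0 : ℝ) < 4 ^ ell N + 1 := by positivity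
    nlinarith

end IsT

theorem itinerary_admissible_general (T : ℝ → ℝ) (hT : IsT T) (δ : ℝ)
    (hδ : δ < 1 / 4) (x : ℕ → ℝ) (hx : IsPseudoOrbit T δ x)
    (j : ℕ → ℕ)
    (hj : ∀ n : ℕ, 1 ≤ j n ∧ T (x n) ∈ Set.Icc ((j n : ℝ) - 1) (j n) ∧
      ∀ m : ℕ, 1 ≤ m → T (x n) ∈ Set.Icc ((m : ℝ) - 1) m → j n ≤ m) :
    ∀ n : ℕ, j (n + 1) ≤ 4 ^ ell (j n) + 1 := by
  intro n
  obtain ⟨hx0, hxδ⟩ := hx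
  have hnext : x (n + 1) < j n + 1 / 4 := by
    linarith [(abs_lt.mp (hxδ n)).2, (hj n).2.1.2]
  have hbound := hT.le_of_lt_add_quarter (hx0 _) hnext
  exact le_of_minimal_unit_interval (hT.nonneg (hx0 _)) (Nat.le_add_left 1 _)
    (by exact_mod_cast hbound) (hj (n + 1)).2.2

/-- If `0 < δ < 1/4`, `(x n)` is a `δ`-pseudo orbit and `j n` is the smallest
positive integer with `T (x n) ∈ [j n - 1, j n]`, then `j (n+1) ≤ 4 ^ ℓ(j n) + 1`
for all `n`. -/
theorem itinerary_admissible (T : ℝ → ℝ) (hT : IsT T) (δ : ℝ)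
    (hδ0 : 0 < δ) (hδ : δ < 1 / 4) (x : ℕ → ℝ) (hx : IsPseudoOrbit T δ x)
    (j : ℕ → ℕ)
    (hj : ∀ n : ℕ, 1 ≤ j n ∧ T (x n) ∈ Set.Icc ((j n : ℝ) - 1) (j n) ∧
      ∀ m : ℕ, 1 ≤ m → T (x n) ∈ Set.Icc ((m : ℝ) - 1) m → j n ≤ m) :
    ∀ n : ℕ, j (n + 1) ≤ 4 ^ ell (j n) + 1 :=
  itinerary_admissible_general T hT δ hδ x hx j hj
end
end

section
/- Let δ > 0, let (x_k)_{k∈ℕ} be a δ-pseudo orbit of T, and let (i_k)_{k∈ℕ} be a sequence of positive integers such that x_k ∈ [i_k − 1, i_k] for all k and i_{k+1} ≤ 4^{ℓ(i_k)} + 1 for all k. Then for every y ∈ ⋂_{k=0}^∞ T^{−k}([i_k − 1, i_k]) one has |T^k(y) − x_k| ≤ δ/4 for all k ∈ ℕ. -/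
open Set Filter

noncomputable section

/-!
On each interval `[i - 1, i]` the map `T` is affine with slope of absolute value at least
`4 + 1 = 5`, since one endpoint is sent to `0` and the other to `4 ^ ℓ + 1 ≥ 5`. If `y` follows
the itinerary of the pseudo orbit, both `T^[k] y` and `x k` lie in `[i k - 1, i k]`, so the error
`e k = |T^[k] y - x k|` is at most `1` and satisfies `e (k + 1) ≥ 5 e k - δ`. Since `δ / 4`
is the fixed point of `e ↦ 5 e - δ`, the excess `e k - δ / 4` grows at least by the factor `5` at
each step; being bounded, it is never positive.
-/

theorem le_div_sub_one_of_mul_sub_le_succ {e : ℕ → ℝ} {c δ : ℝ} (hc : 1 < c)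
    (hbdd : BddAbove (range e)) (hstep : ∀ k, c * e k - δ ≤ e (k + 1)) (k : ℕ) :
    e k ≤ δ / (c - 1) := by
  set d := δ / (c - 1)
  have hd : c * d - δ = d := by
    have hc1 : c - 1 ≠ 0 := sub_ne_zero.mpr hc.ne'
    simp only [d]; field_simp; ring
  have hgrow : ∀ m k, c ^ m * (e k - d) ≤ e (k + m) - d := by
    intro m
    induction m with
    | zero => simp
    | succ m ih =>
      intro k
      calc c ^ (m + 1) * (e k - d) = c ^ m * (c * e k - c * d) := by ring
        _ ≤ c ^ m * (e (k + 1) - d) :=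
          mul_le_mul_of_nonneg_left (by linarith [hstep k]) (pow_pos (by linarith) m).le
        _ ≤ e (k + m + 1) - d := by
          rw [add_right_comm]; exact ih (k + 1)
  obtain ⟨B, hB⟩ := hbdd
  by_contra! hk
  have hpos : 0 < e k - d := sub_pos.mpr hk
  obtain ⟨m, hm⟩ := pow_unbounded_of_one_lt ((B - d) / (e k - d)) hc
  have hbig : B - d < c ^ m * (e k - d) := (div_lt_iff₀ hpos).mp hm
  linarith [hgrow m k, hB (mem_range_self (k + m))]

theorem one_le_ell (n : ℕ) : 1 ≤ ell n := by
  have hne : {k : ℕ | 1 ≤ k ∧ n ≤ 4 ^ k}.Nonempty :=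
    ⟨max 1 n, le_max_left _ _,
      (Nat.lt_pow_self (by norm_num : 1 < 4)).le.trans
        (Nat.pow_le_pow_right (by norm_num) (le_max_right _ _))⟩
  exact (Nat.sInf_mem hne).1

theorem five_le_abs_Tval_succ_sub (n : ℕ) : 5 ≤ |Tval (n + 1) - Tval n| := by
  have h4 : ∀ m, (4 : ℝ) ≤ 4 ^ ell m := fun m =>
    le_self_pow₀ (by norm_num) (Nat.one_le_iff_ne_zero.mp (one_le_ell m))
  rcases Nat.even_or_odd n with hn | hn
  · have hn' : ¬Even (n + 1) := by simp [Nat.even_add_one, hn]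
    rw [Tval, Tval, if_pos hn, if_neg hn', abs_of_nonneg (by linarith [h4 (n + 1)])]
    linarith [h4 (n + 1)]
  · have hn' : ¬Even n := Nat.not_even_iff_odd.mpr hn
    rw [Tval, Tval, if_neg hn', if_pos (by simp [Nat.even_add_one, hn']),
      abs_of_nonpos (by linarith [h4 n])]
    linarith [h4 n]

theorem IsT.five_mul_abs_sub_le {T : ℝ → ℝ} (hT : IsT T) {m : ℕ} (hm : 1 ≤ m) {a b : ℝ}
    (ha : a ∈ Icc ((m : ℝ) - 1) m) (hb : b ∈ Icc ((m : ℝ) - 1) m) :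
    5 * |a - b| ≤ |T a - T b| := by
  obtain ⟨n, rfl⟩ := Nat.exists_eq_add_of_le' hm
  push_cast at ha hb
  rw [add_sub_cancel_right] at ha hb
  have hdiff : T a - T b = (a - b) * (Tval (n + 1) - Tval n) := by
    rw [hT n a ha, hT n b hb]; ring
  rw [hdiff, abs_mul, mul_comm 5]
  exact mul_le_mul_of_nonneg_left (five_le_abs_Tval_succ_sub n) (abs_nonneg _)

theorem orbit_quarter_delta_shadows_general (T : ℝ → ℝ) (hT : IsT T) (δ : ℝ)
    (x : ℕ → ℝ) (hx : IsPseudoOrbit T δ x) (i : ℕ → ℕ)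
    (hipos : ∀ k : ℕ, 1 ≤ i k)
    (hmem : ∀ k : ℕ, x k ∈ Set.Icc ((i k : ℝ) - 1) (i k))
    (y : ℝ) (hy : y ∈ ⋂ k : ℕ, T^[k] ⁻¹' Set.Icc ((i k : ℝ) - 1) (i k)) :
    ∀ k : ℕ, |T^[k] y - x k| ≤ δ / 4 := by
  have hyk : ∀ k, T^[k] y ∈ Icc ((i k : ℝ) - 1) (i k) := mem_iInter.mp hy
  have hbdd : BddAbove (range fun k => |T^[k] y - x k|) := by
    refine ⟨1, forall_mem_range.mpr fun k => ?_⟩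
    simpa [← Real.dist_eq] using Real.dist_le_of_mem_Icc (hyk k) (hmem k)
  have hstep : ∀ k, 5 * |T^[k] y - x k| - δ ≤ |T^[k + 1] y - x (k + 1)| := by
    intro k
    have hexp := hT.five_mul_abs_sub_le (hipos k) (hyk k) (hmem k)
    have htri := abs_sub_le (T (T^[k] y)) (x (k + 1)) (T (x k))
    rw [Function.iterate_succ_apply']
    linarith [hx.2 k]
  intro k
  simpa [show (5 : ℝ) - 1 = 4 by norm_num] using
    le_div_sub_one_of_mul_sub_le_succ (by norm_num : (1 : ℝ) < 5) hbdd hstep k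

/-- If `(x k)` is a `δ`-pseudo orbit with an admissible itinerary `(i k)`
(meaning `x k ∈ [i k - 1, i k]` and `i (k+1) ≤ 4 ^ ℓ(i k) + 1`), then every
point `y` of `⋂ k, T^[k] ⁻¹' [i k - 1, i k]` satisfies
`|T^[k] y - x k| ≤ δ / 4` for all `k`. -/
theorem orbit_quarter_delta_shadows (T : ℝ → ℝ) (hT : IsT T) (δ : ℝ)
    (hδ0 : 0 < δ) (x : ℕ → ℝ) (hx : IsPseudoOrbit T δ x) (i : ℕ → ℕ)
    (hipos : ∀ k : ℕ, 1 ≤ i k)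
    (hmem : ∀ k : ℕ, x k ∈ Set.Icc ((i k : ℝ) - 1) (i k))
    (hadm : ∀ k : ℕ, i (k + 1) ≤ 4 ^ ell (i k) + 1)
    (y : ℝ) (hy : y ∈ ⋂ k : ℕ, T^[k] ⁻¹' Set.Icc ((i k : ℝ) - 1) (i k)) :
    ∀ k : ℕ, |T^[k] y - x k| ≤ δ / 4 :=
  orbit_quarter_delta_shadows_general T hT δ x hx i hipos hmem y hy
end
end
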